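/- Let G be a group acting on a nonempty compact Hausdorff topological space X such that for every g ∈ G the translation map x ↦ g • x is continuous, and let E(X) be the enveloping semigroup of the flow. The set of almost periodic elements of E(X) is a right ideal: if f ∈ E(X) is almost periodic and g ∈ E(X), then f ∘ g belongs to E(X) and f ∘ g is almost periodic. -/

import Mathlib

open Set

/-- The enveloping semigroup of the `G`-flow `X`: the closure in `X → X` (product
topology) of the set of translation maps. -/
def envSemigroup (G X : Type*) [Group G] [MulAction G X] [TopologicalSpace X] :
    Set (X → X) :=
  closure {e : X → X | ∃ g : G, e = fun x => g • x}

/-- Closure of the `G`-orbit of `f : X → X` under left translation. -/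
def funOrbitClosure (G : Type*) {X : Type*} [Group G] [MulAction G X]
    [TopologicalSpace X] (f : X → X) : Set (X → X) :=
  closure {e : X → X | ∃ h : G, e = (fun x => h • x) ∘ f}

/-- A subflow of the function space `X → X` under the `G`-action
`h • e = (fun x => h • x) ∘ e`. -/
def IsFunSubflow (G : Type*) {X : Type*} [Group G] [MulAction G X]
    [TopologicalSpace X] (M : Set (X → X)) : Prop :=
  M.Nonempty ∧ IsClosed M ∧ ∀ h : G, ∀ e ∈ M, ((fun x => h • x) ∘ e) ∈ M

/-- `f` is almost periodic if the closure of its `G`-orbit is a minimal subflow. -/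
def IsAlmostPeriodicFun (G : Type*) {X : Type*} [Group G] [MulAction G X]
    [TopologicalSpace X] (f : X → X) : Prop :=
  IsFunSubflow G (funOrbitClosure G f) ∧
    ∀ M ⊆ funOrbitClosure G f, IsFunSubflow G M → M = funOrbitClosure G f

/-!
Write `O(f)` for the orbit closure of `f`. If `M ⊆ O(f ∘ g)` is a subflow, compactness of
`X → X` gives `O(f ∘ g) ⊆ O(f) ∘ g`, so `N := {e ∈ O(f) | e ∘ g ∈ M}` is nonempty; it is a
subflow, hence equals `O(f)` by minimality. Thus `f ∈ N`, i.e. `f ∘ g ∈ M`, and `M` contains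
the whole orbit closure of `f ∘ g`.
-/

section

variable {G X : Type*} [Group G] [MulAction G X]

lemma mapsTo_comp_left_smul_orbit (h : G) (f : X → X) :
    MapsTo (fun e : X → X => (fun x => h • x) ∘ e)
      {e | ∃ k : G, e = (fun x => k • x) ∘ f} {e | ∃ k : G, e = (fun x => k • x) ∘ f} := by
  rintro _ ⟨k, rfl⟩
  exact ⟨h * k, by funext x; simp [mul_smul]⟩

variable [TopologicalSpace X]

lemma comp_mem_envSemigroup (hcont : ∀ g : G, Continuous fun x : X => g • x)
    {f g : X → X} (hf : f ∈ envSemigroup G X) (hg : g ∈ envSemigroup G X) :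
    f ∘ g ∈ envSemigroup G X := by
  have translation_comp_mem : MapsTo (· ∘ g) {e : X → X | ∃ k : G, e = fun x => k • x}
      (envSemigroup G X) := by
    rintro _ ⟨k, rfl⟩
    exact (mapsTo_comp_left_smul_orbit k id).closure (Pi.continuous_postcomp (hcont k)) hg
  have := translation_comp_mem.closure (Pi.continuous_precomp g) hf
  rwa [envSemigroup, closure_closure] at this

lemma mem_funOrbitClosure_self (f : X → X) : f ∈ funOrbitClosure G f :=
  subset_closure ⟨1, by funext x; simp⟩

lemma isFunSubflow_funOrbitClosure (hcont : ∀ g : G, Continuous fun x : X => g • x)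
    (f : X → X) : IsFunSubflow G (funOrbitClosure G f) :=
  ⟨⟨f, mem_funOrbitClosure_self f⟩, isClosed_closure, fun h =>
    (mapsTo_comp_left_smul_orbit h f).closure (Pi.continuous_postcomp (hcont h))⟩

lemma IsFunSubflow.funOrbitClosure_subset {M : Set (X → X)} (hM : IsFunSubflow G M)
    {f : X → X} (hf : f ∈ M) : funOrbitClosure G f ⊆ M :=
  closure_minimal (by rintro _ ⟨h, rfl⟩; exact hM.2.2 h f hf) hM.2.1

lemma IsFunSubflow.inter_preimage_comp {A M : Set (X → X)} (hA : IsFunSubflow G A)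
    (hM : IsFunSubflow G M) (g : X → X) (hne : (A ∩ (· ∘ g) ⁻¹' M).Nonempty) :
    IsFunSubflow G (A ∩ (· ∘ g) ⁻¹' M) :=
  ⟨hne, hA.2.1.inter (hM.2.1.preimage (Pi.continuous_precomp g)),
    fun h _ he => ⟨hA.2.2 h _ he.1, hM.2.2 h _ he.2⟩⟩

lemma funOrbitClosure_comp_subset_image [CompactSpace X] [T2Space X] (f g : X → X) :
    funOrbitClosure G (f ∘ g) ⊆ (· ∘ g) '' funOrbitClosure G f := by
  have image_closed : IsClosed ((· ∘ g) '' funOrbitClosure G f) :=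
    (isClosed_closure.isCompact.image (Pi.continuous_precomp g)).isClosed
  refine closure_minimal ?_ image_closed
  rintro _ ⟨h, rfl⟩
  exact ⟨(fun x => h • x) ∘ f, subset_closure ⟨h, rfl⟩, rfl⟩

lemma IsAlmostPeriodicFun.mem_of_isFunSubflow {f : X → X} (hf : IsAlmostPeriodicFun G f)
    {M : Set (X → X)} (hMf : M ⊆ funOrbitClosure G f) (hM : IsFunSubflow G M) : f ∈ M :=
  hf.2 M hMf hM ▸ mem_funOrbitClosure_self f

lemma isAlmostPeriodicFun_of_forall_mem (hcont : ∀ g : G, Continuous fun x : X => g • x)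
    {f : X → X} (hf : ∀ M ⊆ funOrbitClosure G f, IsFunSubflow G M → f ∈ M) :
    IsAlmostPeriodicFun G f :=
  ⟨isFunSubflow_funOrbitClosure hcont f, fun M hMf hM =>
    hMf.antisymm (hM.funOrbitClosure_subset (hf M hMf hM))⟩

end

theorem almostPeriodic_rightIdeal_general
    {G X : Type*} [Group G] [MulAction G X]
    [TopologicalSpace X] [CompactSpace X] [T2Space X]
    (hcont : ∀ g : G, Continuous fun x : X => g • x)
    (f : X → X) (hf : f ∈ envSemigroup G X) (hap : IsAlmostPeriodicFun G f)
    (g : X → X) (hg : g ∈ envSemigroup G X) :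
    f ∘ g ∈ envSemigroup G X ∧ IsAlmostPeriodicFun G (f ∘ g) := by
  refine ⟨comp_mem_envSemigroup hcont hf hg,
    isAlmostPeriodicFun_of_forall_mem hcont fun M hM hMflow => ?_⟩
  obtain ⟨m, hm⟩ := hMflow.1
  obtain ⟨e, heO, rfl⟩ := funOrbitClosure_comp_subset_image f g (hM hm)
  have hN := hap.1.inter_preimage_comp hMflow g ⟨e, heO, hm⟩
  exact (hap.mem_of_isFunSubflow inter_subset_left hN).2

/-- The almost periodic elements of the enveloping semigroup form a right ideal. -/
theorem almostPeriodic_rightIdeal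
    {G X : Type*} [Group G] [MulAction G X]
    [TopologicalSpace X] [CompactSpace X] [T2Space X] [Nonempty X]
    (hcont : ∀ g : G, Continuous fun x : X => g • x)
    (f : X → X) (hf : f ∈ envSemigroup G X) (hap : IsAlmostPeriodicFun G f)
    (g : X → X) (hg : g ∈ envSemigroup G X) :
    f ∘ g ∈ envSemigroup G X ∧ IsAlmostPeriodicFun G (f ∘ g) :=
  almostPeriodic_rightIdeal_general hcont f hf hap g hg
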